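/- The abstract synthesis function f_{(φ_p, φ_f)}, defined by removing from K all transitions t with φ_p(t, K, R) = true and adding to R all source states of necessary transitions t of A with φ_f(t, K, R) = true together with the dangling states of the pruned automaton, is monotone on the cpo of pairs (K, R) provided φ_p and φ_f are antitone in K and monotone in R (i.e., if T_{K'} ⊆ T_K and R ⊆ R' then φ(t, K, R) = true implies φ(t, K', R') = true). -/

import Mathlib

structure Auto (Q L : Type) where
  q0 : Q
  T : Set (Q × L × Q)
  F : Set Q

def stepRel {Q L : Type} (T : Set (Q × L × Q)) (q q' : Q) : Prop :=
  ∃ a, (q, a, q') ∈ T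

def ReachT {Q L : Type} (T : Set (Q × L × Q)) : Q → Q → Prop :=
  Relation.ReflTransGen (stepRel T)

def DanglingT {Q L : Type} (q0 : Q) (F : Set Q) (T : Set (Q × L × Q)) (q : Q) : Prop :=
  ¬ ReachT T q0 q ∨ ¬ ∃ qf ∈ F, ReachT T q qf

def pairLe {α β : Type} (p p' : Set α × Set β) : Prop :=
  p'.1 ⊆ p.1 ∧ p.2 ⊆ p'.2

/-- The abstract synthesis step for pruning predicate `phip` and forbidden
predicate `phif`. -/
def absF {Q L : Type} (q0 : Q) (F : Set Q) (Tnec : Set (Q × L × Q))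
    (phip phif : (Q × L × Q) → Set (Q × L × Q) → Set Q → Prop)
    (p : Set (Q × L × Q) × Set Q) : Set (Q × L × Q) × Set Q :=
  let TK' := {t ∈ p.1 | ¬ phip t p.1 p.2}
  (TK', p.2 ∪ {q | ∃ t ∈ Tnec, t.1 = q ∧ phif t p.1 p.2}
            ∪ {q | DanglingT q0 F TK' q})

theorem stepRel_mono {Q L : Type} {T T' : Set (Q × L × Q)} (hT : T' ⊆ T) {q q' : Q}
    (h : stepRel T' q q') : stepRel T q q' :=
  let ⟨a, ha⟩ := h
  ⟨a, hT ha⟩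

theorem ReachT.mono {Q L : Type} {T T' : Set (Q × L × Q)} (hT : T' ⊆ T) {q q' : Q}
    (h : ReachT T' q q') : ReachT T q q' :=
  Relation.ReflTransGen.mono (fun _ _ => stepRel_mono hT) _ _ h

theorem DanglingT.anti {Q L : Type} {q0 : Q} {F : Set Q} {T T' : Set (Q × L × Q)}
    (hT : T' ⊆ T) {q : Q} (h : DanglingT q0 F T q) : DanglingT q0 F T' q := by
  rcases h with hunreach | hdead
  · exact Or.inl fun hreach => hunreach (hreach.mono hT)
  · exact Or.inr fun ⟨qf, hqf, hreach⟩ => hdead ⟨qf, hqf, hreach.mono hT⟩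

theorem pruned_subset_pruned {α β : Type} {phi : α → Set α → Set β → Prop}
    (hphi : ∀ t T T' R R', T' ⊆ T → R ⊆ R' → phi t T R → phi t T' R')
    {T T' : Set α} {R R' : Set β} (hT : T' ⊆ T) (hR : R ⊆ R') :
    {t ∈ T' | ¬ phi t T' R'} ⊆ {t ∈ T | ¬ phi t T R} :=
  fun t ⟨ht, hnot⟩ => ⟨hT ht, fun h => hnot (hphi t T T' R R' hT hR h)⟩

theorem stmt11_general {Q L : Type} (A : Auto Q L)
    (Tnec : Set (Q × L × Q))
    (phip phif : (Q × L × Q) → Set (Q × L × Q) → Set Q → Prop)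
    (hphip : ∀ t T T' Rr Rr', T' ⊆ T → Rr ⊆ Rr' → phip t T Rr → phip t T' Rr')
    (hphif : ∀ t T T' Rr Rr', T' ⊆ T → Rr ⊆ Rr' → phif t T Rr → phif t T' Rr') :
    ∀ p p', pairLe p p' →
      pairLe (absF A.q0 A.F Tnec phip phif p) (absF A.q0 A.F Tnec phip phif p') := by
  rintro ⟨T, R⟩ ⟨T', R'⟩ ⟨hT, hR⟩
  have hpruned := pruned_subset_pruned hphip hT hR
  refine ⟨hpruned, ?_⟩
  rintro q ((hq | ⟨t, htn, rfl, hf⟩) | hdangling)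
  · exact Or.inl (Or.inl (hR hq))
  · exact Or.inl (Or.inr ⟨t, htn, rfl, hphif t T T' R R' hT hR hf⟩)
  · exact Or.inr (hdangling.anti hpruned)

/-- The abstract synthesis function is monotone on the cpo of pairs provided
the pruning and forbidden predicates are antitone in the automaton component
and monotone in the bad-state component. -/
theorem stmt11 {Q L : Type} [Fintype Q] [Fintype L] (A : Auto Q L)
    (Tnec : Set (Q × L × Q)) (hTnec : Tnec ⊆ A.T)
    (phip phif : (Q × L × Q) → Set (Q × L × Q) → Set Q → Prop)
    (hphip : ∀ t T T' Rr Rr', T' ⊆ T → Rr ⊆ Rr' → phip t T Rr → phip t T' Rr')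
    (hphif : ∀ t T T' Rr Rr', T' ⊆ T → Rr ⊆ Rr' → phif t T Rr → phif t T' Rr') :
    ∀ p p', pairLe p p' →
      pairLe (absF A.q0 A.F Tnec phip phif p) (absF A.q0 A.F Tnec phip phif p') :=
  stmt11_general A Tnec phip phif hphip hphif
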